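/- Conditional entropy bound via typicality (Lemma 2, restated with its operative hypotheses). Let p be a pmf on a finite set 𝒰 × 𝒱 × ℰ × 𝒵 and let p(e,z|u,v) denote its conditional pmf. Fix n ≥ 1, δ ∈ (0,1), ε₂ ∈ [0,1]. Let C, (U^n, V^n) ∈ 𝒰^n × 𝒱^n and (E^n, Z^n) ∈ ℰ^n × 𝒵^n be random variables such that, conditionally on (C, U^n, V^n) = (c, u^n, v^n), the pairs (E_i, Z_i), i = 1, …, n, are independent with P[E_i = e, Z_i = z | C = c, U^n = u^n, V^n = v^n] = p(e, z | u_i, v_i). If P[(U^n, V^n, E^n, Z^n) ∈ T_δ^n(p)] ≥ 1 − ε₂, then H(E^n, Z^n | C, U^n, V^n) ≥ (1 − ε₂)·(1 − δ)·n·H_p(E, Z | U, V), where H_p(E, Z | U, V) is the conditional entropy under p. -/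

import Mathlib

open scoped BigOperators Classical

noncomputable section

/-- The function `x ↦ -x·log₂ x` used in Shannon entropy (with `0·log 0 = 0`). -/
def nH (x : ℝ) : ℝ := -(x * Real.logb 2 x)

/-- Shannon entropy (in bits) of a pmf on a finite set. -/
def Hent {S : Type*} [Fintype S] (p : S → ℝ) : ℝ := ∑ s, nH (p s)

/-- Pushforward of a pmf along a map: the distribution of the random variable `f`. -/
def pmap {Ω S : Type*} [Fintype Ω] (p : Ω → ℝ) (f : Ω → S) : S → ℝ :=
  fun s => ∑ ω, if f ω = s then p ω else 0

/-- Entropy (in bits) of the random variable `f` on the finite probability space `(Ω, p)`. -/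
def entOf {Ω S : Type*} [Fintype Ω] [Fintype S] (p : Ω → ℝ) (f : Ω → S) : ℝ :=
  Hent (pmap p f)

/-- Conditional Shannon entropy `H(f | g)` (in bits). -/
def condEnt {Ω S T : Type*} [Fintype Ω] [Fintype S] [Fintype T]
    (p : Ω → ℝ) (f : Ω → S) (g : Ω → T) : ℝ :=
  entOf p (fun ω => (f ω, g ω)) - entOf p g

/-- Mutual information `I(f; g)` (in bits). -/
def MI {Ω S T : Type*} [Fintype Ω] [Fintype S] [Fintype T]
    (p : Ω → ℝ) (f : Ω → S) (g : Ω → T) : ℝ :=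
  entOf p f + entOf p g - entOf p (fun ω => (f ω, g ω))

/-- Conditional mutual information `I(f; g | h)` (in bits). -/
def CMI {Ω S T W : Type*} [Fintype Ω] [Fintype S] [Fintype T] [Fintype W]
    (p : Ω → ℝ) (f : Ω → S) (g : Ω → T) (h : Ω → W) : ℝ :=
  entOf p (fun ω => (f ω, h ω)) + entOf p (fun ω => (g ω, h ω))
    - entOf p (fun ω => (f ω, g ω, h ω)) - entOf p h

/-- `p` is a probability mass function on the finite set `S`. -/
def IsPMF {S : Type*} [Fintype S] (p : S → ℝ) : Prop :=
  (∀ s, 0 ≤ p s) ∧ ∑ s, p s = 1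

/-- `W` is a transition probability (stochastic kernel) from `S` to `T`. -/
def IsKernel {S T : Type*} [Fintype S] [Fintype T] (W : S → T → ℝ) : Prop :=
  ∀ s, IsPMF (W s)

/-- Number of occurrences of the symbol `s` in the sequence `xs`. -/
def freqCount {S : Type*} {n : ℕ} (xs : Fin n → S) (s : S) : ℕ :=
  (Finset.univ.filter (fun i => xs i = s)).card

/-- `xs` lies in the (robustly) `δ`-typical set `T_δⁿ(p)`: every empirical frequency is
within a relative `δ` of the corresponding probability. -/
def InTyp {S : Type*} [Fintype S] {n : ℕ} (p : S → ℝ) (δ : ℝ) (xs : Fin n → S) : Prop :=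
  ∀ s, |(freqCount xs s : ℝ) / (n : ℝ) - p s| ≤ δ * p s

/-!
By the chain rule, `H(p) - H(p_UV)` is the `p`-average of `H(q(·|u,v))`, and since the channel
`q` is memoryless, `H(Eⁿ,Zⁿ | C,Uⁿ,Vⁿ)` is the `P`-average of `∑ᵢ H(q(·|uᵢ,vᵢ))`. Grouping this
sum by the symbols of the quadruple sequence, it is `∑ₛ N(s) H(q(·|s_UV))`, and on the typical
set every count `N(s)` is at least `(1-δ) n p(s)`. As the typical set has probability at least
`1 - ε₂` and all summands are nonnegative, the bound follows.
-/

open Finset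

lemma nH_nonneg {x : ℝ} (h0 : 0 ≤ x) (h1 : x ≤ 1) : 0 ≤ nH x :=
  neg_nonneg.2 (mul_nonpos_of_nonneg_of_nonpos h0 (Real.logb_nonpos one_lt_two h0 h1))

lemma nH_mul (x y : ℝ) : nH (x * y) = y * nH x + x * nH y := by
  rcases eq_or_ne x 0 with rfl | hx
  · simp [nH]
  rcases eq_or_ne y 0 with rfl | hy
  · simp [nH]
  simp only [nH, Real.logb_mul hx hy]
  ring

lemma nH_prod {ι : Type*} [DecidableEq ι] (s : Finset ι) (x : ι → ℝ) :
    nH (∏ i ∈ s, x i) = ∑ i ∈ s, (∏ j ∈ s.erase i, x j) * nH (x i) := by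
  induction s using Finset.induction_on with
  | empty => simp [nH]
  | insert a t ha ih =>
    rw [prod_insert ha, nH_mul, ih, sum_insert ha, erase_insert ha, mul_sum]
    congr 1
    refine sum_congr rfl fun i hi => ?_
    rw [erase_insert_of_ne (ne_of_mem_of_not_mem hi ha).symm,
      prod_insert fun h => ha (mem_of_mem_erase h)]
    ring

lemma IsPMF.le_one {S : Type*} [Fintype S] {p : S → ℝ} (hp : IsPMF p) (s : S) : p s ≤ 1 :=
  hp.2 ▸ single_le_sum (fun t _ => hp.1 t) (mem_univ s)

lemma Hent_nonneg {S : Type*} [Fintype S] {p : S → ℝ} (hp : IsPMF p) : 0 ≤ Hent p :=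
  sum_nonneg fun s _ => nH_nonneg (hp.1 s) (hp.le_one s)

lemma Hent_comp_equiv {S T : Type*} [Fintype S] [Fintype T] (e : S ≃ T) (p : T → ℝ) :
    Hent (p ∘ e) = Hent p :=
  Fintype.sum_equiv e _ _ fun _ => rfl

lemma sum_nH_const_mul {B : Type*} [Fintype B] (a : ℝ) {K : B → ℝ} (hK : ∑ b, K b = 1) :
    ∑ b, nH (a * K b) = nH a + a * Hent K := by
  simp only [nH_mul, sum_add_distrib, ← sum_mul, ← mul_sum, hK, one_mul]
  rfl

lemma Hent_pi {ι B : Type*} [Fintype ι] [DecidableEq ι] [Fintype B] (K : ι → B → ℝ)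
    (hK : ∀ i, ∑ b, K i b = 1) :
    Hent (fun f : ι → B => ∏ i, K i (f i)) = ∑ i, Hent (K i) := by
  simp only [Hent, nH_prod]
  rw [sum_comm]
  refine sum_congr rfl fun i _ => ?_
  -- each summand is a product over `j`, so the sum over `f` factorizes; all factors but
  -- the `i`-th sum to one
  have hfactor : ∀ f : ι → B, (∏ j ∈ univ.erase i, K j (f j)) * nH (K i (f i))
      = ∏ j, if j = i then nH (K j (f j)) else K j (f j) := by
    intro f
    rw [← prod_erase_mul univ _ (mem_univ i), if_pos rfl]
    congr 1
    exact prod_congr rfl fun j hj => (if_neg (ne_of_mem_erase hj)).symm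
  simp only [hfactor]
  rw [← Fintype.prod_sum fun j b => if j = i then nH (K j b) else K j b,
    prod_eq_single i (fun j _ hj => by simp only [if_neg hj, hK]) (by simp)]
  simp

lemma Hent_prod_kernel {A B : Type*} [Fintype A] [Fintype B] (μ : A → ℝ) {K : A → B → ℝ}
    (hK : ∀ a, ∑ b, K a b = 1) :
    Hent (fun x : A × B => μ x.1 * K x.1 x.2) = Hent μ + ∑ a, μ a * Hent (K a) := by
  rw [Hent, Fintype.sum_prod_type]
  simp only [sum_nH_const_mul _ (hK _), sum_add_distrib]
  rfl

lemma sum_prod_kernel_mul {A B : Type*} [Fintype A] [Fintype B] (μ : A → ℝ)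
    {K : A → B → ℝ} (hK : ∀ a, ∑ b, K a b = 1) (f : A → ℝ) :
    ∑ x : A × B, μ x.1 * K x.1 x.2 * f x.1 = ∑ a, μ a * f a := by
  simp only [Fintype.sum_prod_type, ← sum_mul, ← mul_sum, hK, mul_one]

lemma pmap_fst_prod_kernel {A B : Type*} [Fintype A] [Fintype B] (μ : A → ℝ)
    {K : A → B → ℝ} (hK : ∀ a, ∑ b, K a b = 1) :
    pmap (fun x : A × B => μ x.1 * K x.1 x.2) Prod.fst = μ := by
  funext a
  simp [pmap, Fintype.sum_prod_type, ← mul_sum, hK]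

lemma pmap_comp_equiv {Ω Ω' S : Type*} [Fintype Ω] [Fintype Ω'] (e : Ω ≃ Ω')
    (P : Ω' → ℝ) (f : Ω' → S) : pmap (P ∘ e) (f ∘ e) = pmap P f :=
  funext fun _ => Fintype.sum_equiv e _ _ fun _ => rfl

lemma entOf_of_injective {Ω S : Type*} [Fintype Ω] [Fintype S] (P : Ω → ℝ) {f : Ω → S}
    (hf : Function.Injective f) : entOf P f = Hent P := by
  refine (Fintype.sum_of_injective f hf _ _ (fun s hs => ?_) fun ω => ?_).symm
  · rw [pmap, sum_eq_zero fun ω _ => if_neg fun h => hs ⟨ω, h⟩]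
    simp [nH]
  · simp [pmap, hf.eq_iff]

lemma condEnt_comp_equiv {Ω Ω' S T : Type*} [Fintype Ω] [Fintype Ω'] [Fintype S] [Fintype T]
    (e : Ω ≃ Ω') (P : Ω' → ℝ) (f : Ω' → S) (g : Ω' → T) :
    condEnt (P ∘ e) (f ∘ e) (g ∘ e) = condEnt P f g := by
  unfold condEnt entOf
  rw [← pmap_comp_equiv e P g, ← pmap_comp_equiv e P (fun ω => (f ω, g ω))]
  rfl

lemma condEnt_prod_kernel {A B : Type*} [Fintype A] [Fintype B] (μ : A → ℝ)
    {K : A → B → ℝ} (hK : ∀ a, ∑ b, K a b = 1) :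
    condEnt (fun x : A × B => μ x.1 * K x.1 x.2) Prod.snd Prod.fst
      = ∑ a, μ a * Hent (K a) := by
  rw [condEnt, entOf_of_injective (f := fun x : A × B => (x.2, x.1)) _ Prod.swap_injective,
    entOf, pmap_fst_prod_kernel μ hK, Hent_prod_kernel μ hK]
  ring

lemma sum_comp_eq_sum_freqCount_mul {S : Type*} [Fintype S] {n : ℕ} (xs : Fin n → S)
    (h : S → ℝ) : ∑ i, h (xs i) = ∑ s, (freqCount xs s : ℝ) * h s := by
  rw [← sum_fiberwise' univ xs h]
  simp [freqCount]

lemma InTyp.mul_le_freqCount {S : Type*} [Fintype S] {n : ℕ} {p : S → ℝ} {δ : ℝ}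
    {xs : Fin n → S} (hxs : InTyp p δ xs) (s : S) :
    (1 - δ) * n * p s ≤ freqCount xs s := by
  rcases Nat.eq_zero_or_pos n with rfl | hn
  · simp
  have hn' : (0 : ℝ) < n := Nat.cast_pos.2 hn
  have := (abs_le.1 (hxs s)).1
  rw [le_sub_iff_add_le, le_div_iff₀ hn'] at this
  linarith

lemma InTyp.mul_sum_le_sum {S : Type*} [Fintype S] {n : ℕ} {p : S → ℝ} {δ : ℝ}
    {xs : Fin n → S} (hxs : InTyp p δ xs) {h : S → ℝ} (hh : ∀ s, 0 ≤ h s) :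
    (1 - δ) * n * ∑ s, p s * h s ≤ ∑ i, h (xs i) := by
  rw [sum_comp_eq_sum_freqCount_mul, mul_sum]
  exact sum_le_sum fun s _ => by
    rw [← mul_assoc]; exact mul_le_mul_of_nonneg_right (hxs.mul_le_freqCount s) (hh s)

lemma sum_mul_eq_sum_marginal_mul {U V W : Type*} [Fintype U] [Fintype V] [Fintype W]
    (p : U × V × W → ℝ) (f : U × V → ℝ) :
    ∑ s, p s * f (s.1, s.2.1) = ∑ uv : U × V, (∑ w, p (uv.1, uv.2, w)) * f uv := by
  rw [← Fintype.sum_equiv (Equiv.prodAssoc U V W) _ _ fun _ => rfl, Fintype.sum_prod_type]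
  simp only [sum_mul]
  rfl

lemma Hent_sub_Hent_marginal {U V W : Type*} [Fintype U] [Fintype V] [Fintype W]
    (p : U × V × W → ℝ) {q : U × V → W → ℝ} (hq : ∀ uv, ∑ w, q uv w = 1)
    (hcond : ∀ u v w, p (u, v, w) = (∑ w', p (u, v, w')) * q (u, v) w) :
    Hent p - Hent (fun uv : U × V => ∑ w, p (uv.1, uv.2, w))
      = ∑ uv : U × V, (∑ w, p (uv.1, uv.2, w)) * Hent (q uv) := by
  set pUV := fun uv : U × V => ∑ w, p (uv.1, uv.2, w)
  have hp : p ∘ Equiv.prodAssoc U V W = fun x => pUV x.1 * q x.1 x.2 :=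
    funext fun x => hcond x.1.1 x.1.2 x.2
  rw [← Hent_comp_equiv (Equiv.prodAssoc U V W), hp, Hent_prod_kernel pUV hq]
  ring

lemma condEnt_memoryless {C ι X Y : Type*} [Fintype C] [Fintype ι] [DecidableEq ι]
    [Fintype X] [Fintype Y] (μ : C × (ι → X) → ℝ) {W : X → Y → ℝ}
    (hW : ∀ x, ∑ y, W x y = 1) (P : C × (ι → X) × (ι → Y) → ℝ)
    (hP : ∀ c xs ys, P (c, xs, ys) = μ (c, xs) * ∏ i, W (xs i) (ys i)) :
    condEnt P (fun ω => ω.2.2) (fun ω => (ω.1, ω.2.1))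
      = ∑ ω, P ω * ∑ i, Hent (W (ω.2.1 i)) := by
  set e := Equiv.prodAssoc C (ι → X) (ι → Y)
  have hK (y : C × (ι → X)) : ∑ ys : ι → Y, ∏ i, W (y.2 i) (ys i) = 1 := by
    rw [← Fintype.prod_sum fun i => W (y.2 i)]
    simp [hW]
  have hPe : P ∘ e = fun x => μ x.1 * ∏ i, W (x.1.2 i) (x.2 i) :=
    funext fun x => hP x.1.1 x.1.2 x.2
  have hsum : ∑ x : (C × (ι → X)) × (ι → Y),
      μ x.1 * (∏ i, W (x.1.2 i) (x.2 i)) * ∑ i, Hent (W (x.1.2 i))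
        = ∑ ω, P ω * ∑ i, Hent (W (ω.2.1 i)) :=
    Fintype.sum_equiv e _ _ fun x => by simp only [e, Equiv.prodAssoc_apply, hP]
  rw [← condEnt_comp_equiv e, hPe, ← hsum,
    sum_prod_kernel_mul μ hK fun y => ∑ i, Hent (W (y.2 i))]
  exact condEnt_prod_kernel μ hK |>.trans (by simp only [Hent_pi _ fun i => hW _])

lemma mul_le_sum_mul_of_le_on {Ω : Type*} [Fintype Ω] {w F : Ω → ℝ} {G : Ω → Prop}
    {a B : ℝ} (hw : ∀ ω, 0 ≤ w ω) (hF : ∀ ω, 0 ≤ F ω) (hB : 0 ≤ B)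
    (hGF : ∀ ω, G ω → B ≤ F ω) (ha : a ≤ ∑ ω, if G ω then w ω else 0) :
    a * B ≤ ∑ ω, w ω * F ω :=
  calc a * B ≤ (∑ ω, if G ω then w ω else 0) * B := mul_le_mul_of_nonneg_right ha hB
    _ = ∑ ω, (if G ω then w ω else 0) * B := sum_mul _ _ _
    _ ≤ ∑ ω, w ω * F ω := sum_le_sum fun ω _ => by
        split_ifs with hG
        · exact mul_le_mul_of_nonneg_left (hGF ω hG) (hw ω)
        · simpa using mul_nonneg (hw ω) (hF ω)

theorem cond_entropy_typicality_general {Cs U V Et Zt : Type*}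
    [Fintype Cs] [Fintype U] [Fintype V] [Fintype Et] [Fintype Zt]
    (p : U × V × Et × Zt → ℝ) (hp : IsPMF p)
    (q : U × V → Et × Zt → ℝ) (hq : IsKernel q)
    (hcond : ∀ u v e z,
      p (u, v, e, z) = (∑ ez : Et × Zt, p (u, v, ez.1, ez.2)) * q (u, v) (e, z))
    (n : ℕ) (δ ε₂ : ℝ)
    (hδ : δ ∈ Set.Ioo (0 : ℝ) 1)
    (μ : Cs × (Fin n → U × V) → ℝ) (hμ : IsPMF μ)
    (P : Cs × (Fin n → U × V) × (Fin n → Et × Zt) → ℝ)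
    (hP : ∀ c uv ez, P (c, uv, ez) = μ (c, uv) * ∏ i, q (uv i) (ez i))
    (htyp : 1 - ε₂ ≤ ∑ ω, if InTyp p δ
        (fun i => ((ω.2.1 i).1, (ω.2.1 i).2, (ω.2.2 i).1, (ω.2.2 i).2))
      then P ω else 0) :
    (1 - ε₂) * (1 - δ) * (n : ℝ) *
        (Hent p - Hent (fun uv : U × V => ∑ ez : Et × Zt, p (uv.1, uv.2, ez.1, ez.2)))
      ≤ condEnt P (fun ω => ω.2.2) (fun ω => (ω.1, ω.2.1)) := by
  have hqsum (uv : U × V) : ∑ ez, q uv ez = 1 := (hq uv).2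
  have hHq_nonneg : 0 ≤ ∑ uv : U × V, (∑ ez, p (uv.1, uv.2, ez)) * Hent (q uv) :=
    sum_nonneg fun uv _ => mul_nonneg (sum_nonneg fun _ _ => hp.1 _) (Hent_nonneg (hq uv))
  have hP_nonneg (ω : Cs × (Fin n → U × V) × (Fin n → Et × Zt)) : 0 ≤ P ω := by
    rw [hP]
    exact mul_nonneg (hμ.1 _) (prod_nonneg fun i _ => (hq _).1 _)
  rw [Hent_sub_Hent_marginal p hqsum fun u v ez => hcond u v ez.1 ez.2,
    condEnt_memoryless μ hqsum P hP, mul_assoc, mul_assoc, ← mul_assoc (1 - δ)]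
  refine mul_le_sum_mul_of_le_on hP_nonneg
    (fun ω => sum_nonneg fun i _ => Hent_nonneg (hq _)) (by have := hδ.2; positivity)
    (fun ω hω => ?_) htyp
  rw [← sum_mul_eq_sum_marginal_mul]
  exact hω.mul_sum_le_sum fun s => Hent_nonneg (hq _)

/-- **Lemma 2 (conditional entropy bound via typicality).** Let `p` be a pmf on
`𝒰 × 𝒱 × ℰ × 𝒵` with conditional pmf `q(e,z|u,v)`. Suppose that, given
`(C, Uⁿ, Vⁿ)`, the pairs `(E_i, Z_i)` are independent with law `q(·,·|u_i,v_i)`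
(the joint law `P` on `𝒞 × (𝒰 × 𝒱)ⁿ × (ℰ × 𝒵)ⁿ` factorizes accordingly). If the
quadruple of sequences is jointly `δ`-typical with probability at least `1 − ε₂`, then
`H(Eⁿ, Zⁿ | C, Uⁿ, Vⁿ) ≥ (1 − ε₂)(1 − δ) n H_p(E, Z | U, V)`. -/
theorem cond_entropy_typicality {Cs U V Et Zt : Type*}
    [Fintype Cs] [Fintype U] [Fintype V] [Fintype Et] [Fintype Zt]
    (p : U × V × Et × Zt → ℝ) (hp : IsPMF p)
    (q : U × V → Et × Zt → ℝ) (hq : IsKernel q)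
    (hcond : ∀ u v e z,
      p (u, v, e, z) = (∑ ez : Et × Zt, p (u, v, ez.1, ez.2)) * q (u, v) (e, z))
    (n : ℕ) (hn : 1 ≤ n) (δ ε₂ : ℝ)
    (hδ : δ ∈ Set.Ioo (0 : ℝ) 1) (hε₂ : ε₂ ∈ Set.Icc (0 : ℝ) 1)
    (μ : Cs × (Fin n → U × V) → ℝ) (hμ : IsPMF μ)
    (P : Cs × (Fin n → U × V) × (Fin n → Et × Zt) → ℝ)
    (hP : ∀ c uv ez, P (c, uv, ez) = μ (c, uv) * ∏ i, q (uv i) (ez i))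
    (htyp : 1 - ε₂ ≤ ∑ ω, if InTyp p δ
        (fun i => ((ω.2.1 i).1, (ω.2.1 i).2, (ω.2.2 i).1, (ω.2.2 i).2))
      then P ω else 0) :
    (1 - ε₂) * (1 - δ) * (n : ℝ) *
        (Hent p - Hent (fun uv : U × V => ∑ ez : Et × Zt, p (uv.1, uv.2, ez.1, ez.2)))
      ≤ condEnt P (fun ω => ω.2.2) (fun ω => (ω.1, ω.2.1)) :=
  cond_entropy_typicality_general p hp q hq hcond n δ ε₂ hδ μ hμ P hP htyp
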